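/- arXiv:1203.1346 — 7 statements merged into one kernel-verified Lean document; each statement's English description precedes it below -/
import Mathlib

section
/- For subgroups L ≤ G × H, M ≤ H × K, N ≤ K × I of products of finite groups, there is a group isomorphism (k₂(L) ∩ k₁(M*N)) / (k₂(L) ∩ k₁(M)) ≅ (k₂(L*M) ∩ k₁(N)) / (k₂(M) ∩ k₁(N)); in particular |k₂(L) ∩ k₁(M)| · |k₂(L*M) ∩ k₁(N)| = |k₂(L) ∩ k₁(M*N)| · |k₂(M) ∩ k₁(N)|. -/
/-! Put `A = k₂(L) ∩ k₁(M*N)` and `C = k₂(L*M) ∩ k₁(N)`. The subgroup `M ∩ (A × C)` of `A × C`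
projects onto both factors, and its Goursat kernels `{a | (a,1) ∈ M}` and `{c | (1,c) ∈ M}` are
`k₂(L) ∩ k₁(M)` and `k₂(M) ∩ k₁(N)`. Goursat's lemma gives the isomorphism of quotients, and
Lagrange's theorem turns it into the identity of orders. -/

open Subgroup

section Defs
variable {G H K : Type*} [Group G] [Group H] [Group K]

/-- Image of `L ≤ G × H` under the first projection. -/
def p1 (L : Subgroup (G × H)) : Subgroup G := L.map (MonoidHom.fst G H)

/-- Image of `L ≤ G × H` under the second projection. -/
def p2 (L : Subgroup (G × H)) : Subgroup H := L.map (MonoidHom.snd G H)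

/-- `k₁(L) = {g | (g,1) ∈ L}`. -/
def k1 (L : Subgroup (G × H)) : Subgroup G := L.comap (MonoidHom.inl G H)

/-- `k₂(L) = {h | (1,h) ∈ L}`. -/
def k2 (L : Subgroup (G × H)) : Subgroup H := L.comap (MonoidHom.inr G H)

/-- The star (composition of relations) product of subgroups. -/
def starSub (L : Subgroup (G × H)) (M : Subgroup (H × K)) : Subgroup (G × K) where
  carrier := {p | ∃ h : H, (p.1, h) ∈ L ∧ (h, p.2) ∈ M}
  one_mem' := ⟨1, L.one_mem, M.one_mem⟩
  mul_mem' := by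
    rintro ⟨g, k⟩ ⟨g', k'⟩ ⟨h, hL, hM⟩ ⟨h', hL', hM'⟩
    exact ⟨h * h', L.mul_mem hL hL', M.mul_mem hM hM'⟩
  inv_mem' := by
    rintro ⟨g, k⟩ ⟨h, hL, hM⟩
    exact ⟨h⁻¹, L.inv_mem hL, M.inv_mem hM⟩

/-- The opposite subgroup `L° ≤ H × G` of `L ≤ G × H`. -/
def oppSub (L : Subgroup (G × H)) : Subgroup (H × G) :=
  L.comap (MulEquiv.prodComm : H × G ≃* G × H).toMonoidHom

end Defs

namespace Subgroup

variable {G H : Type*} [Group G] [Group H]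

theorem nonempty_quotient_mulEquiv_of_goursat_eq {I : Subgroup (G × H)}
    (hI₁ : Function.Surjective (Prod.fst ∘ I.subtype))
    (hI₂ : Function.Surjective (Prod.snd ∘ I.subtype))
    {G' : Subgroup G} {H' : Subgroup H} [G'.Normal] [H'.Normal]
    (hG' : I.goursatFst = G') (hH' : I.goursatSnd = H') :
    Nonempty (G ⧸ G' ≃* H ⧸ H') := by
  subst hG' hH'
  exact ⟨(goursat_surjective hI₁ hI₂).choose⟩

theorem card_mul_card_eq_of_relIndex_eq {A B : Subgroup G} {C D : Subgroup H}
    (hBA : B ≤ A) (hDC : D ≤ C) (h : B.relIndex A = D.relIndex C) :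
    Nat.card B * Nat.card C = Nat.card A * Nat.card D := by
  simp only [← relIndex_bot_left]
  rw [← relIndex_mul_relIndex _ _ _ bot_le hBA, ← relIndex_mul_relIndex _ _ _ bot_le hDC, h]
  ring

end Subgroup

section Star

variable {G H K I : Type*} [Group G] [Group H] [Group K] [Group I]

theorem k1_le_k1_starSub (M : Subgroup (H × K)) (N : Subgroup (K × I)) :
    k1 M ≤ k1 (starSub M N) :=
  fun _ hM => ⟨1, hM, N.one_mem⟩

theorem k2_le_k2_starSub (L : Subgroup (G × H)) (M : Subgroup (H × K)) :
    k2 M ≤ k2 (starSub L M) :=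
  fun _ hM => ⟨1, L.one_mem, hM⟩

variable (L : Subgroup (G × H)) (M : Subgroup (H × K)) (N : Subgroup (K × I))

def starMiddle : Subgroup (↥(k2 L ⊓ k1 (starSub M N)) × ↥(k2 (starSub L M) ⊓ k1 N)) :=
  M.comap ((k2 L ⊓ k1 (starSub M N)).subtype.prodMap (k2 (starSub L M) ⊓ k1 N).subtype)

theorem surjective_fst_starMiddle :
    Function.Surjective (Prod.fst ∘ (starMiddle L M N).subtype) := by
  rintro ⟨h, hL, k, hM, hN⟩
  exact ⟨⟨(⟨h, hL, k, hM, hN⟩, ⟨k, ⟨h, hL, hM⟩, hN⟩), hM⟩, rfl⟩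

theorem surjective_snd_starMiddle :
    Function.Surjective (Prod.snd ∘ (starMiddle L M N).subtype) := by
  rintro ⟨k, ⟨h, hL, hM⟩, hN⟩
  exact ⟨⟨(⟨h, hL, k, hM, hN⟩, ⟨k, ⟨h, hL, hM⟩, hN⟩), hM⟩, rfl⟩

theorem goursatFst_starMiddle :
    (starMiddle L M N).goursatFst = (k2 L ⊓ k1 M).subgroupOf (k2 L ⊓ k1 (starSub M N)) := by
  ext ⟨h, hL, -⟩
  simp only [Subgroup.mem_goursatFst, Subgroup.mem_subgroupOf, Subgroup.mem_inf]
  exact ⟨fun hM => ⟨hL, hM⟩, And.right⟩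

theorem goursatSnd_starMiddle :
    (starMiddle L M N).goursatSnd = (k2 M ⊓ k1 N).subgroupOf (k2 (starSub L M) ⊓ k1 N) := by
  ext ⟨k, -, hN⟩
  simp only [Subgroup.mem_goursatSnd, Subgroup.mem_subgroupOf, Subgroup.mem_inf]
  exact ⟨fun hM => ⟨hM, hN⟩, And.left⟩

end Star

theorem stmt4_general {G H K I : Type*} [Group G] [Group H] [Group K] [Group I]
    (L : Subgroup (G × H)) (M : Subgroup (H × K)) (N : Subgroup (K × I))
    [((k2 L ⊓ k1 M).subgroupOf (k2 L ⊓ k1 (starSub M N))).Normal]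
    [((k2 M ⊓ k1 N).subgroupOf (k2 (starSub L M) ⊓ k1 N)).Normal] :
    Nonempty
      ((↥(k2 L ⊓ k1 (starSub M N)) ⧸ (k2 L ⊓ k1 M).subgroupOf (k2 L ⊓ k1 (starSub M N))) ≃*
       (↥(k2 (starSub L M) ⊓ k1 N) ⧸ (k2 M ⊓ k1 N).subgroupOf (k2 (starSub L M) ⊓ k1 N))) ∧
    Nat.card (k2 L ⊓ k1 M : Subgroup H) * Nat.card (k2 (starSub L M) ⊓ k1 N : Subgroup K) =
      Nat.card (k2 L ⊓ k1 (starSub M N) : Subgroup H) * Nat.card (k2 M ⊓ k1 N : Subgroup K) := by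
  obtain ⟨e⟩ := Subgroup.nonempty_quotient_mulEquiv_of_goursat_eq
    (surjective_fst_starMiddle L M N) (surjective_snd_starMiddle L M N)
    (goursatFst_starMiddle L M N) (goursatSnd_starMiddle L M N)
  exact ⟨⟨e⟩, Subgroup.card_mul_card_eq_of_relIndex_eq
    (inf_le_inf_left _ (k1_le_k1_starSub M N)) (inf_le_inf_right _ (k2_le_k2_starSub L M))
    (Nat.card_congr e.toEquiv)⟩

/-- Group isomorphism `(k₂(L) ∩ k₁(M*N))/(k₂(L) ∩ k₁(M)) ≅ (k₂(L*M) ∩ k₁(N))/(k₂(M) ∩ k₁(N))`,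
and the resulting cardinality identity. -/
theorem stmt4 {G H K I : Type*} [Group G] [Group H] [Group K] [Group I]
    [Finite G] [Finite H] [Finite K] [Finite I]
    (L : Subgroup (G × H)) (M : Subgroup (H × K)) (N : Subgroup (K × I))
    [((k2 L ⊓ k1 M).subgroupOf (k2 L ⊓ k1 (starSub M N))).Normal]
    [((k2 M ⊓ k1 N).subgroupOf (k2 (starSub L M) ⊓ k1 N)).Normal] :
    Nonempty
      ((↥(k2 L ⊓ k1 (starSub M N)) ⧸ (k2 L ⊓ k1 M).subgroupOf (k2 L ⊓ k1 (starSub M N))) ≃*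
       (↥(k2 (starSub L M) ⊓ k1 N) ⧸ (k2 M ⊓ k1 N).subgroupOf (k2 (starSub L M) ⊓ k1 N))) ∧
    Nat.card (k2 L ⊓ k1 M : Subgroup H) * Nat.card (k2 (starSub L M) ⊓ k1 N : Subgroup K) =
      Nat.card (k2 L ⊓ k1 (starSub M N) : Subgroup H) * Nat.card (k2 M ⊓ k1 N : Subgroup K) :=
  stmt4_general L M N
end

section
/- Let R be a commutative ring in which |H| is invertible for each relevant group. For subgroups L ≤ G × H, M ≤ H × K, define κ(L,M) := |k₂(L) ∩ k₁(M)| / |H| ∈ R. Then κ satisfies the 2-cocycle relation κ(L,M)·κ(L*M,N) = κ(L,M*N)·κ(M,N) for all L ≤ G × H, M ≤ H × K, N ≤ K × I (with |H|, |K| invertible in R). -/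
open Subgroup

/-- `κ(L,M) = |k₂(L) ∩ k₁(M)| / |H|` as an element of `R` (with `|H|` invertible). -/
noncomputable def kappa (R : Type*) [CommRing R] {G H K : Type*}
    [Group G] [Group H] [Group K] (L : Subgroup (G × H)) (M : Subgroup (H × K)) : R :=
  (Nat.card (k2 L ⊓ k1 M : Subgroup H) : R) * Ring.inverse ((Nat.card H : R))

section Aux
variable {H K : Type*} [Group H] [Group K] [Finite H] [Finite K]

lemma card_ker_mul_card_range {G H : Type*} [Group G] [Group H] [Finite G] (f : G →* H) :
    Nat.card f.range * Nat.card f.ker = Nat.card G := by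
  rw [Subgroup.card_eq_card_quotient_mul_card_subgroup f.ker,
    Nat.card_congr (QuotientGroup.quotientKerEquivRange f).toEquiv]

lemma goursat1 (S : Subgroup (H × K)) :
    Nat.card (p1 S) * Nat.card (k2 S) = Nat.card S := by
  set f : S →* H := (MonoidHom.fst H K).comp S.subtype with hf
  have hr : (p1 S : Subgroup H) = f.range := by
    ext h
    simp only [p1, Subgroup.mem_map, MonoidHom.mem_range, hf, MonoidHom.comp_apply,
      MonoidHom.coe_fst, Subgroup.coe_subtype]
    constructor
    · rintro ⟨x, hx, rfl⟩; exact ⟨⟨x, hx⟩, rfl⟩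
    · rintro ⟨⟨x, hx⟩, rfl⟩; exact ⟨x, hx, rfl⟩
  have hk : Nat.card f.ker = Nat.card (k2 S) := by
    refine Nat.card_congr ⟨fun x => ⟨x.1.1.2, ?_⟩, fun y => ⟨(⟨((1 : H), (y : K)), y.2⟩ : S), rfl⟩,
      ?_, fun y => rfl⟩
    · have h1 : (x.1 : H × K).1 = 1 := x.2
      have : ((1 : H), (x.1 : H × K).2) = (x.1 : H × K) := by
        ext <;> simp [h1]
      simpa [k2, Subgroup.mem_comap] using this ▸ x.1.2
    · rintro ⟨⟨⟨x1, x2⟩, hx⟩, h1⟩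
      have h1' : x1 = 1 := h1
      subst h1'
      rfl
  rw [hr, ← hk, card_ker_mul_card_range]

lemma goursat2 (S : Subgroup (H × K)) :
    Nat.card (p2 S) * Nat.card (k1 S) = Nat.card S := by
  set f : S →* K := (MonoidHom.snd H K).comp S.subtype with hf
  have hr : (p2 S : Subgroup K) = f.range := by
    ext h
    simp only [p2, Subgroup.mem_map, MonoidHom.mem_range, hf, MonoidHom.comp_apply,
      MonoidHom.coe_snd, Subgroup.coe_subtype]
    constructor
    · rintro ⟨x, hx, rfl⟩; exact ⟨⟨x, hx⟩, rfl⟩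
    · rintro ⟨⟨x, hx⟩, rfl⟩; exact ⟨x, hx, rfl⟩
  have hk : Nat.card f.ker = Nat.card (k1 S) := by
    refine Nat.card_congr ⟨fun x => ⟨x.1.1.1, ?_⟩, fun y => ⟨(⟨((y : H), (1 : K)), y.2⟩ : S), rfl⟩,
      ?_, fun y => rfl⟩
    · have h1 : (x.1 : H × K).2 = 1 := x.2
      have : ((x.1 : H × K).1, (1 : K)) = (x.1 : H × K) := by
        ext <;> simp [h1]
      simpa [k1, Subgroup.mem_comap] using this ▸ x.1.2
    · rintro ⟨⟨⟨x1, x2⟩, hx⟩, h1⟩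
      have h1' : x2 = 1 := h1
      subst h1'
      rfl
  rw [hr, ← hk, card_ker_mul_card_range]

end Aux

/-- The 2-cocycle relation `κ(L,M)·κ(L*M,N) = κ(L,M*N)·κ(M,N)`. -/
theorem stmt5 {R : Type*} [CommRing R] {G H K I : Type*}
    [Group G] [Group H] [Group K] [Group I]
    [Finite G] [Finite H] [Finite K] [Finite I]
    (hH : IsUnit ((Nat.card H : R))) (hK : IsUnit ((Nat.card K : R)))
    (L : Subgroup (G × H)) (M : Subgroup (H × K)) (N : Subgroup (K × I)) :
    kappa R L M * kappa R (starSub L M) N = kappa R L (starSub M N) * kappa R M N := by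
  have hmem : ∀ (L' : Subgroup (G × H)) (M' : Subgroup (H × K)) (p : G × K),
      p ∈ starSub L' M' ↔ ∃ h, (p.1, h) ∈ L' ∧ (h, p.2) ∈ M' := fun _ _ _ => Iff.rfl
  set S : Subgroup (H × K) := M ⊓ (k2 L).prod (k1 N) with hS
  have e1 : p1 S = k2 L ⊓ k1 (starSub M N) := by
    ext h
    simp only [p1, hS, Subgroup.mem_map, Subgroup.mem_inf, Subgroup.mem_prod, k1, k2,
      Subgroup.mem_comap, hmem]
    constructor
    · rintro ⟨⟨h', k⟩, ⟨hM, hL, hN⟩, rfl⟩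
      exact ⟨hL, k, hM, hN⟩
    · rintro ⟨hL, k, hM, hN⟩
      exact ⟨(h, k), ⟨hM, hL, hN⟩, rfl⟩
  have e2 : p2 S = k2 (starSub L M) ⊓ k1 N := by
    ext k
    simp only [p2, hS, Subgroup.mem_map, Subgroup.mem_inf, Subgroup.mem_prod, k1, k2,
      Subgroup.mem_comap, hmem]
    constructor
    · rintro ⟨⟨h, k'⟩, ⟨hM, hL, hN⟩, rfl⟩
      exact ⟨⟨h, hL, hM⟩, hN⟩
    · rintro ⟨⟨h, hL, hM⟩, hN⟩
      exact ⟨(h, k), ⟨hM, hL, hN⟩, rfl⟩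
  have e3 : k1 S = k2 L ⊓ k1 M := by
    ext h
    simp only [hS, k1, k2, Subgroup.mem_comap, Subgroup.mem_inf, Subgroup.mem_prod]
    exact ⟨fun ⟨hM, hL, _⟩ => ⟨hL, hM⟩, fun ⟨hL, hM⟩ => ⟨hM, hL, Subgroup.one_mem _⟩⟩
  have e4 : k2 S = k2 M ⊓ k1 N := by
    ext k
    simp only [hS, k1, k2, Subgroup.mem_comap, Subgroup.mem_inf, Subgroup.mem_prod]
    exact ⟨fun ⟨hM, _, hN⟩ => ⟨hM, hN⟩, fun ⟨hM, hN⟩ => ⟨hM, Subgroup.one_mem _, hN⟩⟩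
  have key : Nat.card (k2 L ⊓ k1 M : Subgroup H) *
        Nat.card (k2 (starSub L M) ⊓ k1 N : Subgroup K)
      = Nat.card (k2 L ⊓ k1 (starSub M N) : Subgroup H) *
        Nat.card (k2 M ⊓ k1 N : Subgroup K) := by
    rw [← e1, ← e2, ← e3, ← e4, mul_comm (Nat.card (k1 S))]
    rw [goursat2, goursat1]
  have keyR : ((Nat.card (k2 L ⊓ k1 M : Subgroup H)) : R) *
        (Nat.card (k2 (starSub L M) ⊓ k1 N : Subgroup K) : R)
      = (Nat.card (k2 L ⊓ k1 (starSub M N) : Subgroup H) : R) *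
        (Nat.card (k2 M ⊓ k1 N : Subgroup K) : R) := by exact_mod_cast congrArg Nat.cast key
  simp only [kappa]
  linear_combination (Ring.inverse ((Nat.card H : R)) * Ring.inverse ((Nat.card K : R))) * keyR
end

section
/- Let (𝒳, ≤) be a finite poset, A an abelian group, φ : 𝒳 → 𝒳 an order-preserving idempotent map with φ(x) ≤ x for all x, and κ : 𝒳 → A a map with κ ∘ φ = κ. Set 𝒴 := φ(𝒳). Then for each z ∈ 𝒳: Σ_{x∈𝒳} μ^𝒳_{x,z} · κ(x) = 0 if z ∉ 𝒴, and equals Σ_{y∈𝒴} μ^𝒴_{y,z} · κ(y) if z ∈ 𝒴, where μ^𝒳 and μ^𝒴 are the Möbius functions of 𝒳 and of the subposet 𝒴. -/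
open Classical in
/-- Lemma (referee): let `𝒳` be a finite poset, `A` an abelian group, `φ : 𝒳 → 𝒳` an
order-preserving idempotent map with `φ(x) ≤ x`, and `κ : 𝒳 → A` with `κ∘φ = κ`.
Set `𝒴 := φ(𝒳)`. Then `Σ_{x∈𝒳} μ^𝒳(x,z)·κ(x)` equals `0` if `z ∉ 𝒴`, and equals
`Σ_{y∈𝒴} μ^𝒴(y,z)·κ(y)` if `z ∈ 𝒴`. Here `μ^𝒳`, `μ^𝒴` are the Möbius functions of
`𝒳` and of the subposet `𝒴`, specified by their defining relations. -/
theorem stmt10 {X A : Type*} [Finite X] [PartialOrder X] [AddCommGroup A]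
    (φ : X → X) (hmono : Monotone φ) (hidem : φ ∘ φ = φ) (hdefl : ∀ x, φ x ≤ x)
    (κ : X → A) (hκ : κ ∘ φ = κ)
    (μX : X → X → ℤ)
    (hX0 : ∀ x z : X, ¬ x ≤ z → μX x z = 0)
    (hX : ∀ x z : X, x ≤ z →
      ∑ᶠ y ∈ {y : X | x ≤ y ∧ y ≤ z}, μX x y = if x = z then 1 else 0)
    (μY : X → X → ℤ)
    (hY0 : ∀ x z : X, ¬ x ≤ z → μY x z = 0)
    (hYrange : ∀ x z : X, x ∉ Set.range φ ∨ z ∉ Set.range φ → μY x z = 0)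
    (hY : ∀ x z : X, x ∈ Set.range φ → z ∈ Set.range φ → x ≤ z →
      ∑ᶠ y ∈ {y : X | y ∈ Set.range φ ∧ x ≤ y ∧ y ≤ z}, μY x y = if x = z then 1 else 0)
    (z : X) :
    ∑ᶠ x : X, μX x z • κ x =
      if z ∈ Set.range φ then ∑ᶠ y ∈ Set.range φ, μY y z • κ y else 0 := by
  classical
  have _inst : Fintype X := Fintype.ofFinite X
  -- finsum over a set = finset sum over the filter
  have hms : ∀ (s : Set X) (f : X → ℤ),
      (∑ᶠ y ∈ s, f y) = ∑ y ∈ Finset.univ.filter (· ∈ s), f y := by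
    intro s f
    rw [← finsum_mem_coe_finset]
    congr 1
    ext y; simp
  have hmsA : ∀ (s : Set X) (f : X → A),
      (∑ᶠ y ∈ s, f y) = ∑ y ∈ Finset.univ.filter (· ∈ s), f y := by
    intro s f
    rw [← finsum_mem_coe_finset]
    congr 1
    ext y; simp
  -- matrices
  set M : Matrix X X ℤ := Matrix.of (fun x y => μX x y) with hM
  set Z : Matrix X X ℤ := Matrix.of (fun x y => if x ≤ y then 1 else 0) with hZ
  have hMZ : M * Z = 1 := by
    ext x w
    rw [Matrix.mul_apply, Matrix.one_apply]
    have h1 : ∀ y, M x y * Z y w = if x ≤ y ∧ y ≤ w then μX x y else 0 := by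
      intro y
      simp only [hM, hZ, Matrix.of_apply]
      by_cases h : y ≤ w
      · by_cases h2 : x ≤ y
        · simp [h, h2]
        · simp [h, h2, hX0 x y h2]
      · simp [h]
    simp_rw [h1]
    by_cases hxw : x ≤ w
    · rw [← Finset.sum_filter]
      have := hX x w hxw
      rw [hms] at this
      rw [← this]
      apply Finset.sum_congr _ (fun _ _ => rfl)
      ext y; simp
    · rw [if_neg (by rintro rfl; exact hxw le_rfl)]
      apply Finset.sum_eq_zero
      intro y _
      rw [if_neg]
      rintro ⟨h1', h2'⟩
      exact hxw (h1'.trans h2')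
  have hZM : Z * M = 1 := mul_eq_one_comm.mp hMZ
  -- padded matrices for the subposet Y = range φ
  set N : Matrix X X ℤ := Matrix.of (fun x y =>
    if x ∈ Set.range φ ∧ y ∈ Set.range φ then μY x y else if x = y then 1 else 0) with hN
  set B : Matrix X X ℤ := Matrix.of (fun x y =>
    if x ∈ Set.range φ ∧ y ∈ Set.range φ then (if x ≤ y then 1 else 0)
    else if x = y then 1 else 0) with hB
  have hNB : N * B = 1 := by
    ext x w
    rw [Matrix.mul_apply, Matrix.one_apply]
    by_cases hx : x ∈ Set.range φ
    · by_cases hw : w ∈ Set.range φ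
      · have h1 : ∀ y, N x y * B y w =
            if y ∈ Set.range φ ∧ x ≤ y ∧ y ≤ w then μY x y else 0 := by
          intro y
          simp only [hN, hB, Matrix.of_apply]
          by_cases hy : y ∈ Set.range φ
          · by_cases h2 : x ≤ y
            · by_cases h3 : y ≤ w
              · simp [hx, hy, hw, h2, h3]
              · simp [hx, hy, hw, h2, h3]
            · simp [hx, hy, hw, h2, hY0 x y h2]
          · have hxy : x ≠ y := by rintro rfl; exact hy hx
            simp [hx, hy, hxy]
        simp_rw [h1]
        by_cases hxw : x ≤ w
        · rw [← Finset.sum_filter]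
          have := hY x w hx hw hxw
          rw [hms] at this
          rw [← this]
          apply Finset.sum_congr _ (fun _ _ => rfl)
          ext y; simp
        · rw [if_neg (by rintro rfl; exact hxw le_rfl)]
          apply Finset.sum_eq_zero
          intro y _
          rw [if_neg]
          rintro ⟨_, h1', h2'⟩
          exact hxw (h1'.trans h2')
      · have h1 : ∀ y, N x y * B y w = 0 := by
          intro y
          by_cases hy : y ∈ Set.range φ
          · have hyw : y ≠ w := by rintro rfl; exact hw hy
            have hB0 : B y w = 0 := by
              simp only [hB, Matrix.of_apply]
              rw [if_neg (fun h => hw h.2), if_neg hyw]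
            rw [hB0, mul_zero]
          · have hxy : x ≠ y := by rintro rfl; exact hy hx
            have hN0 : N x y = 0 := by
              simp only [hN, Matrix.of_apply]
              rw [if_neg (fun h => hy h.2), if_neg hxy]
            rw [hN0, zero_mul]
        simp_rw [h1]
        rw [if_neg (by rintro rfl; exact hw hx)]
        simp
    · have h1 : ∀ y, N x y * B y w = (if x = y then 1 else 0) * B y w := by
        intro y
        simp only [hN, Matrix.of_apply]
        rw [if_neg (by rintro ⟨h, _⟩; exact hx h)]
      simp_rw [h1, ite_mul, one_mul, zero_mul, Finset.sum_ite_eq, Finset.mem_univ, if_true]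
      simp only [hB, Matrix.of_apply]
      rw [if_neg (by rintro ⟨h, _⟩; exact hx h)]
  have hBN : B * N = 1 := mul_eq_one_comm.mp hNB
  -- fiber sums
  set T : X → ℤ := fun y => ∑ x ∈ Finset.univ.filter (fun x => φ x = y), μX x z with hT
  set S : X → ℤ := fun y => T y - μY y z with hS
  -- key: for w in range φ, the upward sum of S vanishes
  have hφfix : ∀ w ∈ Set.range φ, φ w = w := by
    rintro w ⟨v, rfl⟩
    exact congrFun hidem v
  have hwle : ∀ w ∈ Set.range φ, ∀ x, w ≤ φ x ↔ w ≤ x := by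
    intro w hw x
    constructor
    · intro h; exact h.trans (hdefl x)
    · intro h; rw [← hφfix w hw]; exact hmono h
  have key : ∀ w ∈ Set.range φ, ∑ y ∈ Finset.univ.filter (fun y => w ≤ y), S y = 0 := by
    intro w hw
    have hTsum : ∑ y ∈ Finset.univ.filter (fun y => w ≤ y), T y
        = if w = z then 1 else 0 := by
      have hfib := Finset.sum_fiberwise_of_maps_to
        (s := Finset.univ.filter (fun x => w ≤ φ x))
        (t := Finset.univ.filter (fun y => w ≤ y)) (g := φ)
        (fun x hx => by simp_all) (fun x => μX x z)
      have step1 : ∑ y ∈ Finset.univ.filter (fun y => w ≤ y), T y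
          = ∑ x ∈ Finset.univ.filter (fun x => w ≤ φ x), μX x z := by
        rw [← hfib]
        apply Finset.sum_congr rfl
        intro y hy
        simp only [Finset.mem_filter, Finset.mem_univ, true_and] at hy
        rw [hT]
        apply Finset.sum_congr _ (fun _ _ => rfl)
        ext x
        simp only [Finset.mem_filter, Finset.mem_univ, true_and]
        constructor
        · intro h; exact ⟨by rw [h]; exact hy, h⟩
        · exact fun h => h.2
      rw [step1]
      have step2 : (Finset.univ.filter (fun x => w ≤ φ x))
          = Finset.univ.filter (fun x => w ≤ x) := by
        ext x; simp [hwle w hw x]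
      rw [step2]
      have := congrFun (congrFun hZM w) z
      rw [Matrix.mul_apply, Matrix.one_apply] at this
      rw [← this]
      simp only [hZ, hM, Matrix.of_apply]
      rw [Finset.sum_filter]
      apply Finset.sum_congr rfl
      intro y _
      by_cases h : w ≤ y <;> simp [h]
    have hYsum : ∑ y ∈ Finset.univ.filter (fun y => w ≤ y), μY y z
        = if w = z then 1 else 0 := by
      by_cases hz : z ∈ Set.range φ
      · have := congrFun (congrFun hBN w) z
        rw [Matrix.mul_apply, Matrix.one_apply] at this
        rw [← this]
        rw [Finset.sum_filter]
        apply Finset.sum_congr rfl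
        intro y _
        simp only [hB, hN, Matrix.of_apply]
        by_cases hy : y ∈ Set.range φ
        · by_cases h : w ≤ y <;> simp [hw, hy, hz, h]
        · have h1 : w ≠ y := by rintro rfl; exact hy hw
          have h2 : y ≠ z := by rintro rfl; exact hy hz
          simp [hy, h1, h2, hYrange y z (Or.inl hy)]
      · rw [if_neg (by rintro rfl; exact hz hw)]
        apply Finset.sum_eq_zero
        intro y _
        exact hYrange y z (Or.inr hz)
    rw [hS]
    simp only
    rw [Finset.sum_sub_distrib, hTsum, hYsum, sub_self]
  -- downward induction: S ≡ 0
  have hSzero : ∀ y, S y = 0 := by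
    have hwf : WellFounded ((· > ·) : X → X → Prop) := wellFounded_gt
    intro y
    induction y using hwf.induction with
    | _ y ih =>
      by_cases hy : y ∈ Set.range φ
      · have hk := key y hy
        have hsplit : Finset.univ.filter (fun t => y ≤ t)
            = insert y (Finset.univ.filter (fun t => y < t)) := by
          ext t
          simp only [Finset.mem_filter, Finset.mem_univ, true_and, Finset.mem_insert]
          rw [le_iff_lt_or_eq]
          constructor
          · rintro (h | h); · exact Or.inr h
            · exact Or.inl h.symm
          · rintro (h | h); · exact Or.inr h.symm
            · exact Or.inl h
        rw [hsplit, Finset.sum_insert (by simp)] at hk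
        have h0 : ∑ t ∈ Finset.univ.filter (fun t => y < t), S t = 0 := by
          apply Finset.sum_eq_zero
          intro t ht
          simp only [Finset.mem_filter, Finset.mem_univ, true_and] at ht
          exact ih t ht
        rw [h0, add_zero] at hk
        exact hk
      · rw [hS]
        simp only
        have hT0 : T y = 0 := by
          rw [hT]
          simp only
          apply Finset.sum_eq_zero
          intro x hx
          simp only [Finset.mem_filter, Finset.mem_univ, true_and] at hx
          exact absurd ⟨x, hx⟩ hy
        rw [hT0, hYrange y z (Or.inl hy), sub_self]
  have hTY : ∀ y, T y = μY y z := by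
    intro y
    have h : T y - μY y z = 0 := hSzero y
    linarith
  -- assemble
  rw [finsum_eq_sum_of_fintype]
  have lhs_eq : ∑ x : X, μX x z • κ x = ∑ y : X, μY y z • κ y := by
    have h1 : ∀ x : X, μX x z • κ x = μX x z • κ (φ x) := by
      intro x
      have hkx : κ (φ x) = κ x := congrFun hκ x
      rw [hkx]
    simp_rw [h1]
    have hfib := Finset.sum_fiberwise_of_maps_to
      (s := (Finset.univ : Finset X)) (t := (Finset.univ : Finset X)) (g := φ)
      (fun x _ => Finset.mem_univ (φ x)) (fun x => μX x z • κ (φ x))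
    rw [← hfib]
    apply Finset.sum_congr rfl
    intro y _
    have inner : ∑ x ∈ Finset.univ.filter (fun x => φ x = y), μX x z • κ (φ x)
        = T y • κ y := by
      rw [hT, Finset.sum_smul]
      apply Finset.sum_congr rfl
      intro x hx
      simp only [Finset.mem_filter, Finset.mem_univ, true_and] at hx
      rw [hx]
    rw [inner, hTY y]
  rw [lhs_eq]
  by_cases hz : z ∈ Set.range φ
  · rw [if_pos hz, hmsA]
    rw [Finset.sum_filter]
    apply Finset.sum_congr rfl
    intro y _
    by_cases hy : y ∈ Set.range φ
    · simp [hy]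
    · simp [hy, hYrange y z (Or.inl hy)]
  · rw [if_neg hz]
    apply Finset.sum_eq_zero
    intro y _
    rw [hYrange y z (Or.inr hz), zero_smul]
end

section
/- Let G be a finite group, χ the character of a finite-dimensional representation of G over a field R of characteristic 0. If g ∈ G and H ≤ G satisfy Σ_{x ∈ gH} χ(x) ≠ 0, then Σ_{h ∈ H} χ(h) ≠ 0; in particular the restriction of the representation to H contains the trivial representation as a constituent. -/
/-- Let `χ` be the character of a finite-dimensional representation of a finite group `G`
over a field `R` of characteristic `0`. If `Σ_{x ∈ gH} χ(x) ≠ 0` for some `g ∈ G` and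
`H ≤ G`, then `Σ_{h ∈ H} χ(h) ≠ 0`; in particular the restriction to `H` contains the
trivial representation as a constituent (there is a nonzero `H`-fixed vector). -/
theorem stmt13 {R : Type*} [Field R] [CharZero R] {G : Type*} [Group G] [Finite G]
    (V : Type*) [AddCommGroup V] [Module R V] [FiniteDimensional R V]
    (ρ : Representation R G V) (g : G) (H : Subgroup G)
    (hne : ∑ᶠ x : H, LinearMap.trace R V (ρ (g * x)) ≠ 0) :
    (∑ᶠ x : H, LinearMap.trace R V (ρ (x : G)) ≠ 0) ∧
    ∃ v : V, v ≠ 0 ∧ ∀ x : H, ρ (x : G) v = v := by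
  haveI : Fintype G := Fintype.ofFinite G
  haveI : Fintype H := Fintype.ofFinite H
  set N : V →ₗ[R] V := ∑ h : H, ρ (h : G) with hN
  -- left multiplication invariance
  have hinv : ∀ x : H, ρ (x : G) * N = N := by
    intro x
    rw [hN, Finset.mul_sum]
    refine Fintype.sum_equiv (Equiv.mulLeft x) _ _ fun h => ?_
    rw [← map_mul]
    rfl
  -- trace of ρ g * N equals the coset sum
  have htr : LinearMap.trace R V (ρ g * N) = ∑ᶠ x : H, LinearMap.trace R V (ρ (g * x)) := by
    rw [finsum_eq_sum_of_fintype, hN, Finset.mul_sum, map_sum]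
    exact Finset.sum_congr rfl fun x _ => by rw [← map_mul]
  have hN0 : N ≠ 0 := by
    intro h
    rw [h, mul_zero, map_zero] at htr
    exact hne htr.symm
  obtain ⟨w, hw⟩ : ∃ w, N w ≠ 0 := by
    by_contra h
    push_neg at h
    exact hN0 (LinearMap.ext fun w => h w)
  have hfix : ∀ x : H, ρ (x : G) (N w) = N w := fun x => by
    conv_rhs => rw [← hinv x]
    rfl
  refine ⟨?_, N w, hw, hfix⟩
  -- trace N = |H| * finrank (range N) ≠ 0
  have hc : ((Fintype.card H : R)) ≠ 0 := Nat.cast_ne_zero.mpr Fintype.card_ne_zero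
  set P : V →ₗ[R] V := (Fintype.card H : R)⁻¹ • N with hP
  have hNN : ∀ v : V, N (N v) = (Fintype.card H : R) • N v := by
    intro v
    have h1 : N * N = ∑ x : H, (ρ (x : G) * N) := by
      conv_lhs => rw [hN]
      rw [Finset.sum_mul]
    have h2 : N (N v) = ∑ _x : H, N v := by
      have := congrArg (fun f : V →ₗ[R] V => f v) h1
      simpa [hinv] using this
    rw [h2, Finset.sum_const, Finset.card_univ, ← Nat.cast_smul_eq_nsmul R]
  have hproj : LinearMap.IsProj (LinearMap.range N) P := by
    constructor
    · intro v
      exact ⟨(Fintype.card H : R)⁻¹ • v, by simp [hP]⟩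
    · rintro x ⟨v, rfl⟩
      rw [hP]
      simp only [LinearMap.smul_apply]
      rw [hNN, smul_smul, inv_mul_cancel₀ hc, one_smul]
  have htrP : LinearMap.trace R V P = (Module.finrank R (LinearMap.range N) : R) :=
    hproj.trace
  have hrk : Module.finrank R (LinearMap.range N) ≠ 0 := by
    intro h
    have hb : LinearMap.range N = ⊥ := Submodule.finrank_eq_zero.mp h
    exact hw (by simpa [hb] using (hb ▸ LinearMap.mem_range_self N w : N w ∈ (⊥ : Submodule R V)))
  have htrN : LinearMap.trace R V N
      = (Fintype.card H : R) * (Module.finrank R (LinearMap.range N) : R) := by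
    have h3 : LinearMap.trace R V N = (Fintype.card H : R) * LinearMap.trace R V P := by
      rw [hP, map_smul, smul_eq_mul, ← mul_assoc, mul_inv_cancel₀ hc, one_mul]
    rw [h3, htrP]
  rw [finsum_eq_sum_of_fintype, ← map_sum, ← hN, htrN]
  exact mul_ne_zero hc (Nat.cast_ne_zero.mpr hrk)
end

section
/- Let G and H be cyclic p-groups (p prime) and let M' ≤ M ≤ G × H be subgroups with p₂(M') = p₂(M) and p₁(M') < p₁(M) (strict inclusion). Then M = p₁(M) × p₂(M). -/
open Subgroup

section MyHelpers

lemma mem_zpowers_of_orderOf_dvd {α : Type*} [Group α] [Finite α] [IsCyclic α]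
    {a b : α} (h : orderOf a ∣ orderOf b) : a ∈ Subgroup.zpowers b := by
  classical
  cases nonempty_fintype α
  set n := orderOf a with hn
  have hn0 : 0 < n := orderOf_pos a
  set c := b ^ (orderOf b / n) with hc
  have hcord : orderOf c = n := orderOf_pow_orderOf_div (orderOf_pos b).ne' h
  set S : Finset α := Finset.filter (fun x => x ^ n = 1) Finset.univ with hS
  have hsub : (Subgroup.zpowers c : Set α).toFinset ⊆ S := by
    intro x hx
    simp only [Set.mem_toFinset, SetLike.mem_coe] at hx
    simp only [hS, Finset.mem_filter, Finset.mem_univ, true_and]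
    have : orderOf x ∣ n := hcord ▸ orderOf_dvd_of_mem_zpowers hx
    exact orderOf_dvd_iff_pow_eq_one.mp this
  have hcard : S.card ≤ (Subgroup.zpowers c : Set α).toFinset.card := by
    have h1 : (Subgroup.zpowers c : Set α).toFinset.card = n := by
      rw [Set.toFinset_card]
      simp only [SetLike.coe_sort_coe, ← Nat.card_eq_fintype_card, Nat.card_zpowers, hcord]
    rw [h1]
    exact IsCyclic.card_pow_eq_one_le hn0
  have heq := Finset.eq_of_subset_of_card_le hsub hcard
  have ha : a ∈ S := by
    simp only [hS, Finset.mem_filter, Finset.mem_univ, true_and]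
    exact pow_orderOf_eq_one a
  rw [← heq, Set.mem_toFinset] at ha
  exact (Subgroup.zpowers_le.mpr (Subgroup.npow_mem_zpowers b _)) ha

lemma chain_lemma {α : Type*} [Group α] [Finite α] (p : ℕ) [Fact p.Prime]
    (hc : IsCyclic α) (hp : IsPGroup p α) (a b : α) :
    a ∈ Subgroup.zpowers b ∨ b ∈ Subgroup.zpowers a := by
  obtain ⟨m, hm⟩ := IsPGroup.iff_orderOf.mp hp a
  obtain ⟨k, hk⟩ := IsPGroup.iff_orderOf.mp hp b
  rcases le_total m k with h | h
  · exact Or.inl (mem_zpowers_of_orderOf_dvd (by rw [hm, hk]; exact pow_dvd_pow p h))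
  · exact Or.inr (mem_zpowers_of_orderOf_dvd (by rw [hm, hk]; exact pow_dvd_pow p h))

lemma mem_zpowers_zpow_of_coprime {α : Type*} [Group α] (g : α) (k : ℤ)
    (h : IsCoprime k (orderOf g : ℤ)) : g ∈ Subgroup.zpowers (g ^ k) := by
  obtain ⟨u, v, huv⟩ := h
  refine ⟨u, ?_⟩
  have h1 : g ^ ((orderOf g : ℤ)) = 1 := by rw [zpow_natCast, pow_orderOf_eq_one]
  calc (g ^ k) ^ u = g ^ (k * u) * (g ^ ((orderOf g : ℤ))) ^ v := by
        rw [h1, one_zpow, mul_one, zpow_mul]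
   _ = g ^ (k * u + (orderOf g : ℤ) * v) := by rw [← zpow_mul, ← zpow_add]
   _ = g := by rw [show k * u + (orderOf g : ℤ) * v = 1 by linarith, zpow_one]

end MyHelpers

/-- For cyclic `p`-groups `G, H` and `M' ≤ M ≤ G × H` with `p₂(M') = p₂(M)` and
`p₁(M') < p₁(M)`, the group `M` is the full direct product of its projections. -/
theorem stmt14 {G H : Type*} [Group G] [Group H] [Finite G] [Finite H]
    (p : ℕ) [Fact p.Prime]
    (hGc : IsCyclic G) (hGp : IsPGroup p G) (hHc : IsCyclic H) (hHp : IsPGroup p H)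
    (M' M : Subgroup (G × H)) (hle : M' ≤ M)
    (h2 : p2 M' = p2 M) (h1 : p1 M' < p1 M) :
    M = (p1 M).prod (p2 M) := by
  haveI : IsCyclic G := hGc
  -- generator of p1 M
  obtain ⟨⟨g, hgM⟩, hgen⟩ := IsCyclic.exists_generator (α := p1 M)
  have hgenG : ∀ x ∈ p1 M, x ∈ Subgroup.zpowers g := by
    intro x hx
    obtain ⟨k, hk⟩ := hgen ⟨x, hx⟩
    exact ⟨k, congrArg Subtype.val hk⟩
  -- (g, h) ∈ M for some h
  obtain ⟨⟨g₁, h⟩, hxM, hx1⟩ := hgM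
  have hx1' : g₁ = g := hx1
  subst hx1'
  -- h ∈ p2 M' : get (g', h) ∈ M'
  have hh : h ∈ p2 M' := h2 ▸ ⟨(g₁, h), hxM, rfl⟩
  obtain ⟨⟨g', h'⟩, hyM', hy2⟩ := hh
  have hy2' : h' = h := hy2
  subst hy2'
  have hg'p1 : g' ∈ p1 M' := ⟨(g', h'), hyM', rfl⟩
  -- g ∉ p1 M'
  have hgnot : g₁ ∉ p1 M' := by
    intro hg
    exact absurd (fun x hx => Subgroup.zpowers_le.mpr hg (hgenG x hx)) h1.not_ge
  -- g' ∈ zpowers g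
  have hg' : g' ∈ Subgroup.zpowers g₁ := by
    rcases chain_lemma p hGc hGp g₁ g' with hcase | hcase
    · exact absurd (Subgroup.zpowers_le.mpr hg'p1 hcase) hgnot
    · exact hcase
  obtain ⟨k, hk⟩ := hg'
  -- p ∣ k
  have hpInt : Prime (p : ℤ) := Nat.prime_iff_prime_int.mp Fact.out
  obtain ⟨a, ha⟩ := IsPGroup.iff_orderOf.mp hGp g₁
  have hcop : ∀ m : ℤ, ¬ (p : ℤ) ∣ m → IsCoprime m (orderOf g₁ : ℤ) := by
    intro m hm
    rw [ha]
    push_cast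
    exact ((hpInt.coprime_iff_not_dvd.mpr hm).symm).pow_right
  have hk' : g₁ ^ k = g' := hk
  have hpk : (p : ℤ) ∣ k := by
    by_contra hpk
    have hgk : g₁ ^ k ∈ p1 M' := by rw [hk']; exact hg'p1
    exact hgnot (Subgroup.zpowers_le.mpr hgk
      (mem_zpowers_zpow_of_coprime g₁ k (hcop k hpk)))
  -- (g * g'⁻¹, 1) ∈ M
  have hdM : ((g₁ * g'⁻¹, 1) : G × H) ∈ M := by
    have := M.mul_mem hxM (M.inv_mem (hle hyM'))
    simpa using this
  -- g ∈ zpowers (g * g'⁻¹)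
  have hgd : g₁ ∈ Subgroup.zpowers (g₁ * g'⁻¹) := by
    have hd : g₁ * g'⁻¹ = g₁ ^ ((1 : ℤ) - k) := by
      rw [zpow_sub, zpow_one, hk']
    rw [hd]
    refine mem_zpowers_zpow_of_coprime g₁ _ (hcop _ ?_)
    intro hdvd
    have hone : (p : ℤ) ∣ 1 := by
      have := dvd_add hdvd hpk
      simpa using this
    exact hpInt.not_dvd_one hone
  -- hence (g, 1) ∈ M
  have hg1M : ((g₁, 1) : G × H) ∈ M := by
    obtain ⟨m, hm⟩ := hgd
    have : ((g₁ * g'⁻¹, 1) : G × H) ^ m ∈ M := M.zpow_mem hdM m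
    simpa [Prod.pow_mk, hm] using this
  -- every (x, 1) with x ∈ p1 M is in M
  have key1 : ∀ x ∈ p1 M, ((x, 1) : G × H) ∈ M := by
    intro x hx
    obtain ⟨m, hm⟩ := hgenG x hx
    have : ((g₁, 1) : G × H) ^ m ∈ M := M.zpow_mem hg1M m
    simpa [hm] using this
  have key2 : ∀ y ∈ p2 M, ((1, y) : G × H) ∈ M := by
    rintro y ⟨⟨z1, z2⟩, hz, rfl⟩
    have h1' : ((z1, 1) : G × H) ∈ M := key1 z1 ⟨(z1, z2), hz, rfl⟩
    have := M.mul_mem (M.inv_mem h1') hz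
    simpa using this
  ext ⟨x, y⟩
  simp only [Subgroup.mem_prod]
  constructor
  · intro hxy
    exact ⟨⟨(x, y), hxy, rfl⟩, ⟨(x, y), hxy, rfl⟩⟩
  · rintro ⟨hx, hy⟩
    have := M.mul_mem (key1 x hx) (key2 y hy)
    simpa using this
end

section
/- An endomorphism L = (P₁,K₁,α,P₂,K₂) ∈ 𝒮_{G×G} is idempotent with respect to the star product (L*L = L) if and only if the sections (P₁,K₁) and (P₂,K₂) of G are linked (i.e., P₂ ∩ K₁ = P₁ ∩ K₂, (P₂∩P₁)K₂ = P₂, (P₂∩P₁)K₁ = P₁) and α equals the butterfly isomorphism β(P₁,K₁;P₂,K₂). -/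
open Subgroup

section Aux
variable {G H : Type*} [Group G] [Group H]

lemma mem_p1' {L : Subgroup (G × H)} {x : G} : x ∈ p1 L ↔ ∃ y, (x, y) ∈ L := by
  constructor
  · rintro ⟨⟨a, b⟩, hab, rfl⟩; exact ⟨b, hab⟩
  · rintro ⟨y, hy⟩; exact ⟨(x, y), hy, rfl⟩

lemma mem_p2' {L : Subgroup (G × H)} {y : H} : y ∈ p2 L ↔ ∃ x, (x, y) ∈ L := by
  constructor
  · rintro ⟨⟨a, b⟩, hab, rfl⟩; exact ⟨a, hab⟩
  · rintro ⟨x, hx⟩; exact ⟨(x, y), hx, rfl⟩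

lemma mem_k1' {L : Subgroup (G × H)} {x : G} : x ∈ k1 L ↔ (x, 1) ∈ L := Iff.rfl

lemma mem_k2' {L : Subgroup (G × H)} {y : H} : y ∈ k2 L ↔ (1, y) ∈ L := Iff.rfl

end Aux

/-- `L ≤ G × G` is idempotent for the star product iff the sections `(p₁L,k₁L)` and
`(p₂L,k₂L)` are linked and `η_L` is the butterfly isomorphism `β(p₁L,k₁L;p₂L,k₂L)`
(the last clause: `η_L` sends `xk₂L` to `xk₁L` for every `x ∈ p₁L ∩ p₂L`). -/
theorem stmt16 {G : Type*} [Group G] [Finite G] (L : Subgroup (G × G)) :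
    starSub L L = L ↔
      (p2 L ⊓ k1 L = p1 L ⊓ k2 L ∧
       (p2 L ⊓ p1 L) ⊔ k2 L = p2 L ∧
       (p2 L ⊓ p1 L) ⊔ k1 L = p1 L ∧
       ∀ x g : G, x ∈ p1 L → x ∈ p2 L → (g, x) ∈ L → g⁻¹ * x ∈ k1 L) := by
  constructor
  · intro hEq
    have hfw : ∀ {g h : G}, (g, h) ∈ L → ∃ c, (g, c) ∈ L ∧ (c, h) ∈ L := by
      intro g h hp
      rw [← hEq] at hp
      exact hp
    have hbw : ∀ {g h c : G}, (g, c) ∈ L → (c, h) ∈ L → (g, h) ∈ L := by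
      intro g h c h1 h2
      rw [← hEq]
      exact ⟨c, h1, h2⟩
    -- Lemma A
    have hA : ∀ x g : G, x ∈ p1 L → (g, x) ∈ L → g⁻¹ * x ∈ k1 L := by
      intro x g hx hgx
      obtain ⟨a, hxa⟩ := mem_p1'.mp hx
      have hga : (g, a) ∈ L := hbw hgx hxa
      have := L.mul_mem (L.inv_mem hga) hxa
      rw [mem_k1']
      simpa using this
    -- Lemma B
    have hB : ∀ x h : G, x ∈ p2 L → (x, h) ∈ L → x⁻¹ * h ∈ k2 L := by
      intro x h hx hxh
      obtain ⟨b, hbx⟩ := mem_p2'.mp hx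
      have hbh : (b, h) ∈ L := hbw hbx hxh
      have := L.mul_mem (L.inv_mem hbx) hbh
      rw [mem_k2']
      simpa using this
    refine ⟨?_, ?_, ?_, fun x g hx₁ _ hgx => hA x g hx₁ hgx⟩
    · ext x
      simp only [Subgroup.mem_inf]
      constructor
      · rintro ⟨hx2, hxk1⟩
        rw [mem_k1'] at hxk1
        obtain ⟨b, hbx⟩ := mem_p2'.mp hx2
        have hb1 : (b, 1) ∈ L := hbw hbx hxk1
        have h1x : ((1 : G), x) ∈ L := by
          have := L.mul_mem (L.inv_mem hb1) hbx
          simpa using this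
        exact ⟨mem_p1'.mpr ⟨1, hxk1⟩, mem_k2'.mpr h1x⟩
      · rintro ⟨hx1, hxk2⟩
        rw [mem_k2'] at hxk2
        obtain ⟨a, hxa⟩ := mem_p1'.mp hx1
        have h1a : ((1 : G), a) ∈ L := hbw hxk2 hxa
        have hx1' : (x, (1 : G)) ∈ L := by
          have := L.mul_mem hxa (L.inv_mem h1a)
          simpa using this
        exact ⟨mem_p2'.mpr ⟨1, hxk2⟩, mem_k1'.mpr hx1'⟩
    · refine le_antisymm (sup_le inf_le_left ?_) ?_
      · intro y hy
        exact mem_p2'.mpr ⟨1, mem_k2'.mp hy⟩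
      · intro y hy
        obtain ⟨b, hby⟩ := mem_p2'.mp hy
        obtain ⟨c, hbc, hcy⟩ := hfw hby
        have hc : c ∈ p2 L ⊓ p1 L :=
          ⟨mem_p2'.mpr ⟨b, hbc⟩, mem_p1'.mpr ⟨y, hcy⟩⟩
        have hk : c⁻¹ * y ∈ k2 L := hB c y hc.1 hcy
        have := mul_mem ((le_sup_left : p2 L ⊓ p1 L ≤ _) hc)
          ((le_sup_right : k2 L ≤ _) hk)
        simpa using this
    · refine le_antisymm (sup_le inf_le_right ?_) ?_
      · intro y hy
        exact mem_p1'.mpr ⟨1, mem_k1'.mp hy⟩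
      · intro g hg
        obtain ⟨a, hga⟩ := mem_p1'.mp hg
        obtain ⟨c, hgc, hca⟩ := hfw hga
        have hc : c ∈ p2 L ⊓ p1 L :=
          ⟨mem_p2'.mpr ⟨g, hgc⟩, mem_p1'.mpr ⟨a, hca⟩⟩
        have hk : g⁻¹ * c ∈ k1 L := hA c g hc.2 hgc
        have := mul_mem ((le_sup_left : p2 L ⊓ p1 L ≤ _) hc)
          ((le_sup_right : k1 L ≤ _) (inv_mem hk))
        have heq : c * (g⁻¹ * c)⁻¹ = g := by group
        rwa [heq] at this
  · rintro ⟨h1, h2, h3, h4⟩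
    -- k2 is normalized by p2
    have normk2 : ∀ a k : G, a ∈ p2 L → k ∈ k2 L → a * k * a⁻¹ ∈ k2 L := by
      intro a k ha hk
      obtain ⟨b, hba⟩ := mem_p2'.mp ha
      have := L.mul_mem (L.mul_mem hba (mem_k2'.mp hk)) (L.inv_mem hba)
      rw [mem_k2']
      simpa using this
    apply le_antisymm
    · rintro ⟨g, h⟩ ⟨c, hgc, hch⟩
      have hc1 : c ∈ p1 L := mem_p1'.mpr ⟨h, hch⟩
      have hc2 : c ∈ p2 L := mem_p2'.mpr ⟨g, hgc⟩
      have hk : (g⁻¹ * c, (1 : G)) ∈ L := mem_k1'.mp (h4 c g hc1 hc2 hgc)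
      have hconj : ((g * c⁻¹, (1 : G)) : G × G) ∈ L := by
        have := L.mul_mem (L.mul_mem hgc (L.inv_mem hk)) (L.inv_mem hgc)
        have e : ((g, c) * ((g⁻¹ * c, (1 : G)))⁻¹ * ((g, c))⁻¹ : G × G)
            = (g * c⁻¹, 1) := by
          refine Prod.ext ?_ ?_ <;> simp <;> group
        rwa [e] at this
      have := L.mul_mem hconj hch
      simpa using this
    · rintro ⟨g, h⟩ hgh
      -- write h = c * k with c ∈ p2 ⊓ p1, k ∈ k2
      let S : Subgroup G :=
        { carrier := {y | ∃ c, c ∈ p2 L ⊓ p1 L ∧ c⁻¹ * y ∈ k2 L}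
          one_mem' := ⟨1, one_mem _, by simpa using (k2 L).one_mem⟩
          mul_mem' := by
            rintro y y' ⟨c, hc, hk⟩ ⟨c', hc', hk'⟩
            refine ⟨c * c', mul_mem hc hc', ?_⟩
            have hmem := (k2 L).mul_mem (normk2 c'⁻¹ (c⁻¹ * y) (inv_mem hc'.1) hk) hk'
            have e : c'⁻¹ * (c⁻¹ * y) * c'⁻¹⁻¹ * (c'⁻¹ * y') = (c * c')⁻¹ * (y * y') := by
              group
            rwa [e] at hmem
          inv_mem' := by
            rintro y ⟨c, hc, hk⟩
            refine ⟨c⁻¹, inv_mem hc, ?_⟩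
            have hmem := normk2 c (c⁻¹ * y)⁻¹ hc.1 ((k2 L).inv_mem hk)
            have e : c * (c⁻¹ * y)⁻¹ * c⁻¹ = c⁻¹⁻¹ * y⁻¹ := by group
            rwa [e] at hmem }
      have hS : p2 L ≤ S := by
        rw [← h2]
        refine sup_le ?_ ?_
        · intro c hc
          exact ⟨c, hc, by simpa using (k2 L).one_mem⟩
        · intro k hk
          exact ⟨1, one_mem _, by simpa using hk⟩
      obtain ⟨c, hc, hk⟩ := hS (mem_p2'.mpr ⟨g, hgh⟩)
      have hk' : ((1 : G), c⁻¹ * h) ∈ L := mem_k2'.mp hk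
      obtain ⟨b, hbc⟩ := mem_p2'.mp hc.1
      have hbh : (b, h) ∈ L := by
        have := L.mul_mem hbc hk'
        simpa using this
      have hgb : (g * b⁻¹, (1 : G)) ∈ L := by
        have := L.mul_mem hgh (L.inv_mem hbh)
        simpa using this
      have hgc : (g, c) ∈ L := by
        have := L.mul_mem hgb hbc
        simpa using this
      have hbk1 : (b⁻¹ * c, (1 : G)) ∈ L := mem_k1'.mp (h4 c b hc.2 hc.1 hbc)
      have hcb : (c * b⁻¹, (1 : G)) ∈ L := by
        have := L.mul_mem (L.mul_mem hbh hbk1) (L.inv_mem hbh)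
        have e : ((b, h) * (b⁻¹ * c, (1 : G)) * ((b, h))⁻¹ : G × G) = (c * b⁻¹, 1) := by
          refine Prod.ext ?_ ?_ <;> simp <;> group
        rwa [e] at this
      have hch : (c, h) ∈ L := by
        have := L.mul_mem hcb hbh
        simpa using this
      exact ⟨c, hgc, hch⟩
end

section
/- Let G = ⟨x⟩, H = ⟨y⟩, K = ⟨z⟩ be finite cyclic groups, and using the notation _G(k;a,i,b)_H for the subgroup of G × H with projections of orders a | |G|, b | |H|, common quotient of order k | gcd(a,b) and isomorphism determined by i (gcd(i,k)=1): if L = _G(k;a,i,b)_H and M = _H(l;b,j,c)_K (so p₂(L) = p₁(M)), then L*M = _G(gcd(k,l); a, ij, c)_K. -/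
open Subgroup

/-- The subgroup `_G(k;a,i,b)_H` of `G × H` for cyclic groups `G = ⟨x⟩` of order `n` and
`H = ⟨y⟩` of order `m`: the pairs `((x^{n/a})^u, (y^{m/b})^v)` with `u ≡ i·v (mod k)`. -/
def cycSub {G H : Type*} [Group G] [Group H] (x : G) (y : H)
    (n m a b k : ℕ) (i : ℤ) : Subgroup (G × H) where
  carrier := {p | ∃ u v : ℤ,
    p.1 = (x ^ (n / a)) ^ u ∧ p.2 = (y ^ (m / b)) ^ v ∧ (k : ℤ) ∣ (u - i * v)}
  one_mem' := ⟨0, 0, by simp⟩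
  mul_mem' := by
    rintro ⟨g, h⟩ ⟨g', h'⟩ ⟨u, v, hg, hh, hd⟩ ⟨u', v', hg', hh', hd'⟩
    refine ⟨u + u', v + v', ?_, ?_, ?_⟩
    · simpa [zpow_add] using congrArg₂ (· * ·) hg hg'
    · simpa [zpow_add] using congrArg₂ (· * ·) hh hh'
    · have h : u + u' - i * (v + v') = (u - i * v) + (u' - i * v') := by ring
      rw [h]; exact dvd_add hd hd'
  inv_mem' := by
    rintro ⟨g, h⟩ ⟨u, v, hg, hh, hd⟩
    refine ⟨-u, -v, ?_, ?_, ?_⟩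
    · simpa using hg
    · simpa using hh
    · have h : -u - i * (-v) = -(u - i * v) := by ring
      rw [h]; exact dvd_neg.mpr hd

/-- For cyclic groups `G = ⟨x⟩`, `H = ⟨y⟩`, `K = ⟨z⟩` and `L = _G(k;a,i,b)_H`,
`M = _H(l;b,j,c)_K` (so `p₂(L) = p₁(M)`), one has `L*M = _G(gcd(k,l); a, ij, c)_K`. -/
theorem stmt19 {G H K : Type*} [Group G] [Group H] [Group K]
    [Finite G] [Finite H] [Finite K]
    (x : G) (y : H) (z : K)
    (hx : orderOf x = Nat.card G) (hy : orderOf y = Nat.card H)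
    (hz : orderOf z = Nat.card K)
    (a b c k l : ℕ) (i j : ℤ)
    (ha : a ∣ Nat.card G) (hb : b ∣ Nat.card H) (hc : c ∣ Nat.card K)
    (hk : k ∣ Nat.gcd a b) (hl : l ∣ Nat.gcd b c)
    (hi : Int.gcd i (k : ℤ) = 1) (hj : Int.gcd j (l : ℤ) = 1) :
    starSub (cycSub x y (Nat.card G) (Nat.card H) a b k i)
        (cycSub y z (Nat.card H) (Nat.card K) b c l j)
      = cycSub x z (Nat.card G) (Nat.card K) a c (Nat.gcd k l) (i * j) := by
  have hm : 0 < Nat.card H := Nat.card_pos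
  have hyb : orderOf (y ^ (Nat.card H / b)) = b := by
    rw [orderOf_pow, hy, Nat.gcd_eq_right (Nat.div_dvd_of_dvd hb),
      Nat.div_div_self hb hm.ne']
  have hdk : ((Nat.gcd k l : ℕ) : ℤ) ∣ (k : ℤ) := Int.natCast_dvd_natCast.mpr (Nat.gcd_dvd_left _ _)
  have hdl : ((Nat.gcd k l : ℕ) : ℤ) ∣ (l : ℤ) := Int.natCast_dvd_natCast.mpr (Nat.gcd_dvd_right _ _)
  have hkb : (k : ℤ) ∣ (b : ℤ) :=
    Int.natCast_dvd_natCast.mpr (hk.trans (Nat.gcd_dvd_right _ _))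
  ext ⟨g, w⟩
  show (∃ h : H, (∃ u v : ℤ, _) ∧ (∃ u v : ℤ, _)) ↔ _
  constructor
  · rintro ⟨h, ⟨u, v, hg, hh, hd⟩, ⟨v', w', hh', hw, hd'⟩⟩
    refine ⟨u, w', hg, hw, ?_⟩
    have hvv : (b : ℤ) ∣ v - v' := by
      rw [← hyb]
      exact orderOf_dvd_sub_iff_zpow_eq_zpow.mpr (hh ▸ hh')
    obtain ⟨s1, e1⟩ := hd
    obtain ⟨s2, e2⟩ := (hdk.trans hkb).trans hvv
    obtain ⟨s3, e3⟩ := hdl.trans hd'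
    obtain ⟨s0, e0⟩ := hdk
    exact ⟨s0 * s1 + i * s2 + i * s3, by push_cast; linear_combination e0 * s1 + i * e2 + i * e3 +
      (i * s1 + 0) * 0 + e1⟩
  · rintro ⟨u, w', hg, hw, hd⟩
    obtain ⟨s, hs⟩ := hd
    -- Bezout data
    have hβ : (1 : ℤ) = i * Int.gcdA i k + k * Int.gcdB i k := by
      have := Int.gcd_eq_gcd_ab i (k : ℤ); rw [hi] at this; exact_mod_cast this
    have hα : ((Nat.gcd k l : ℕ) : ℤ) = (l : ℤ) * Int.gcdA l k + (k : ℤ) * Int.gcdB l k := by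
      have := Int.gcd_eq_gcd_ab (l : ℤ) (k : ℤ)
      rw [Int.gcd_natCast_natCast, Nat.gcd_comm] at this
      exact this
    set i' := Int.gcdA i k
    set β := Int.gcdB i k
    set α := Int.gcdA l k
    set β' := Int.gcdB l k
    set v : ℤ := j * w' + l * (i' * α * s) with hv
    refine ⟨(y ^ (Nat.card H / b)) ^ v, ⟨u, v, hg, rfl, ?_⟩, ⟨v, w', rfl, hw, ?_⟩⟩
    · exact ⟨β' * s + β * (l : ℤ) * α * s, by
        linear_combination hs + ((l : ℤ) * α * s) * hβ + s * hα⟩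
    · exact ⟨i' * α * s, by ring⟩
end
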